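/- Let n ≥ 1 and let g be an invertible complex n×n matrix such that for every k ∈ {0,1,…,n}, the n×n matrix whose first k columns are the standard basis vectors e₁,…,e_k and whose remaining n−k columns are the first n−k columns of g is invertible. Then there exist unique unipotent upper-triangular matrices x and y such that x⁻¹·g·y is counter-diagonal. -/

import Mathlib

/-- A matrix is unipotent upper-triangular if its diagonal entries are all `1`
and its entries below the diagonal are all `0`. -/
def IsUnipotentUpperTriangular {n : ℕ} (x : Matrix (Fin n) (Fin n) ℂ) : Prop :=
  (∀ i : Fin n, x i i = 1) ∧ ∀ i j : Fin n, j < i → x i j = 0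

/-- A matrix `a` is counter-diagonal if `a i j = 0` whenever `i + j ≠ n + 1`
(in the 1-based indexing `i, j ∈ {1, …, n}`; in 0-based indexing this reads
`i + j + 1 ≠ n`). -/
def IsCounterDiagonal {n : ℕ} (a : Matrix (Fin n) (Fin n) ℂ) : Prop :=
  ∀ i j : Fin n, (i : ℕ) + (j : ℕ) + 1 ≠ n → a i j = 0

/-- The `n × n` matrix whose first `k` columns are the standard basis vectors
`e₁, …, e_k` and whose remaining `n - k` columns are the first `n - k` columns of `g`. -/
noncomputable def flagPairMatrix {n : ℕ} (g : Matrix (Fin n) (Fin n) ℂ) (k : ℕ) :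
    Matrix (Fin n) (Fin n) ℂ :=
  Matrix.of fun i j =>
    if (j : ℕ) < k then (if (i : ℕ) = (j : ℕ) then 1 else 0)
    else g i ⟨(j : ℕ) - k, lt_of_le_of_lt (Nat.sub_le _ _) j.isLt⟩

/-!
Reversing the rows of `g` turns the genericity hypothesis into the invertibility of the leading
principal minors of `g.submatrix Fin.rev id`: its `k × k` leading minor is, up to sign, the
bottom-left `k × k` minor of `g`, which is `det (flagPairMatrix g (n - k))`. A matrix with
invertible leading minors has an `LDU` decomposition (split off the last row and column and
use the Schur complement), and if `g.submatrix Fin.rev id = L * D * U` then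
`x = L.submatrix Fin.rev Fin.rev` and `y = U⁻¹` are unipotent upper triangular with
`x⁻¹ * g * y = D.submatrix Fin.rev id` counter-diagonal.

For uniqueness, two normal forms give `u * α = α' * v` with `u, v` unipotent upper triangular and
`α, α'` invertible counter-diagonal. The `(i, j)` entries read
`u i j.rev * α j.rev j = α' i i.rev * v i.rev j`, which pairs each strictly upper entry of `u`
with a strictly lower entry of `v` and vice versa; hence `u = v = 1`.
-/

namespace Matrix

variable {ι R : Type*}

section Unitriangular

variable [LinearOrder ι]

def IsUpperUnitriangular [Zero R] [One R] (M : Matrix ι ι R) : Prop :=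
  M.IsUpperTriangular ∧ ∀ i, M i i = 1

def IsLowerUnitriangular [Zero R] [One R] (M : Matrix ι ι R) : Prop :=
  Mᵀ.IsUpperUnitriangular

theorem IsUpperUnitriangular.apply_of_lt [Zero R] [One R] {M : Matrix ι ι R}
    (h : M.IsUpperUnitriangular) {i j : ι} (hji : j < i) : M i j = 0 :=
  h.1 hji

theorem isUpperUnitriangular_one [DecidableEq ι] [Zero R] [One R] :
    (1 : Matrix ι ι R).IsUpperUnitriangular :=
  ⟨blockTriangular_one, fun _ => one_apply_eq _⟩

theorem isLowerUnitriangular_one [DecidableEq ι] [Zero R] [One R] :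
    (1 : Matrix ι ι R).IsLowerUnitriangular := by
  rw [IsLowerUnitriangular, transpose_one]
  exact isUpperUnitriangular_one

theorem IsUpperTriangular.mul_apply_self [Fintype ι] [NonUnitalNonAssocSemiring R]
    {M N : Matrix ι ι R} (hM : M.IsUpperTriangular) (hN : N.IsUpperTriangular) (i : ι) :
    (M * N) i i = M i i * N i i := by
  refine (mul_apply ..).trans (Fintype.sum_eq_single i fun k hk => ?_)
  rcases hk.lt_or_gt with hki | hik
  · rw [hM hki, zero_mul]
  · rw [hN hik, mul_zero]

theorem IsUpperUnitriangular.mul [Fintype ι] [NonAssocSemiring R] {M N : Matrix ι ι R}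
    (hM : M.IsUpperUnitriangular) (hN : N.IsUpperUnitriangular) :
    (M * N).IsUpperUnitriangular :=
  ⟨hM.1.mul hN.1, fun i => by rw [hM.1.mul_apply_self hN.1, hM.2, hN.2, one_mul]⟩

section CommRing

variable [Fintype ι] [DecidableEq ι] [CommRing R] {M : Matrix ι ι R}

theorem IsUpperUnitriangular.det_eq_one (h : M.IsUpperUnitriangular) : M.det = 1 := by
  simp [det_of_isUpperTriangular h.1, h.2]

theorem IsUpperUnitriangular.isUnit (h : M.IsUpperUnitriangular) : IsUnit M :=
  (isUnit_iff_isUnit_det M).mpr (h.det_eq_one ▸ isUnit_one)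

theorem IsUpperUnitriangular.inv (h : M.IsUpperUnitriangular) : M⁻¹.IsUpperUnitriangular := by
  have hdet : IsUnit M.det := (isUnit_iff_isUnit_det M).mp h.isUnit
  have := M.invertibleOfIsUnitDet hdet
  have hinv : M⁻¹.IsUpperTriangular := blockTriangular_inv_of_blockTriangular h.1
  refine ⟨hinv, fun i => ?_⟩
  simpa [h.2, nonsing_inv_mul M hdet] using (hinv.mul_apply_self h.1 i).symm

end CommRing

end Unitriangular

section FinIndexed

variable [Zero R] [One R] {m k : ℕ}

theorem IsLowerUnitriangular.submatrix_rev {L : Matrix (Fin m) (Fin m) R}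
    (h : L.IsLowerUnitriangular) : (L.submatrix Fin.rev Fin.rev).IsUpperUnitriangular :=
  ⟨fun _ _ hji => h.1 (Fin.rev_lt_rev.mpr hji), fun i => h.2 i.rev⟩

theorem IsUpperUnitriangular.reindex_fromBlocks {U₁ : Matrix (Fin m) (Fin m) R}
    {U₂ : Matrix (Fin k) (Fin k) R} (h₁ : U₁.IsUpperUnitriangular)
    (h₂ : U₂.IsUpperUnitriangular) (B : Matrix (Fin m) (Fin k) R) :
    (reindex finSumFinEquiv finSumFinEquiv (fromBlocks U₁ B 0 U₂)).IsUpperUnitriangular := by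
  refine ⟨blockTriangular_reindex_iff.mpr ?_, fun i => ?_⟩
  · rintro (i | i) (j | j) hij <;> simp [Fin.lt_def, -Fin.val_fin_lt] at hij ⊢
    · exact h₁.1 hij
    · omega
    · exact h₂.1 hij
  · obtain ⟨i | i, rfl⟩ := finSumFinEquiv.surjective i <;> simp [h₁.2, h₂.2]

theorem IsLowerUnitriangular.reindex_fromBlocks {L₁ : Matrix (Fin m) (Fin m) R}
    {L₂ : Matrix (Fin k) (Fin k) R} (h₁ : L₁.IsLowerUnitriangular)
    (h₂ : L₂.IsLowerUnitriangular) (C : Matrix (Fin k) (Fin m) R) :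
    (reindex finSumFinEquiv finSumFinEquiv (fromBlocks L₁ 0 C L₂)).IsLowerUnitriangular := by
  simpa [IsLowerUnitriangular, transpose_reindex, fromBlocks_transpose] using
    IsUpperUnitriangular.reindex_fromBlocks h₁ h₂ Cᵀ

end FinIndexed

section LDU

def HasLDU [Fintype ι] [LinearOrder ι] [DecidableEq ι] [Semiring R] (A : Matrix ι ι R) : Prop :=
  ∃ (L U : Matrix ι ι R) (d : ι → R),
    L.IsLowerUnitriangular ∧ U.IsUpperUnitriangular ∧ A = L * diagonal d * U

theorem hasLDU_fin_one [Semiring R] (A : Matrix (Fin 1) (Fin 1) R) : A.HasLDU := by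
  refine ⟨1, 1, fun _ => A 0 0, isLowerUnitriangular_one, isUpperUnitriangular_one, ?_⟩
  ext i j
  simp [Subsingleton.elim i 0, Subsingleton.elim j 0]

variable [CommRing R] {m k : ℕ}

theorem HasLDU.reindex_fromBlocks {A : Matrix (Fin m) (Fin m) R} {B : Matrix (Fin m) (Fin k) R}
    {C : Matrix (Fin k) (Fin m) R} {D : Matrix (Fin k) (Fin k) R} (hA : A.HasLDU)
    (hAdet : IsUnit A.det) (hS : (D - C * A⁻¹ * B).HasLDU) :
    (reindex finSumFinEquiv finSumFinEquiv (fromBlocks A B C D)).HasLDU := by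
  obtain ⟨L₁, U₁, d₁, hL₁, hU₁, hA⟩ := hA
  obtain ⟨L₂, U₂, d₂, hL₂, hU₂, hS⟩ := hS
  have := invertibleOfIsUnitDet A hAdet
  have hblocks : fromBlocks A B C D =
      fromBlocks L₁ 0 (C * A⁻¹ * L₁) L₂ * fromBlocks (diagonal d₁) 0 0 (diagonal d₂) *
        fromBlocks U₁ (U₁ * A⁻¹ * B) 0 U₂ := by
    rw [fromBlocks_eq_of_invertible₁₁, invOf_eq_nonsing_inv, hS]
    -- substitute the decomposition of `A` only in the middle factor, not inside `A⁻¹`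
    generalize A⁻¹ = A'
    rw [hA]
    simp only [fromBlocks_multiply, Matrix.mul_assoc, Matrix.mul_zero, Matrix.zero_mul, add_zero,
      zero_add, Matrix.mul_one, Matrix.one_mul]
  refine ⟨_, _, Sum.elim d₁ d₂ ∘ finSumFinEquiv.symm,
    hL₁.reindex_fromBlocks hL₂ (C * A⁻¹ * L₁), hU₁.reindex_fromBlocks hU₂ (U₁ * A⁻¹ * B), ?_⟩
  rw [hblocks, fromBlocks_diagonal, reindex_apply, reindex_apply, reindex_apply,
    ← submatrix_diagonal_equiv, submatrix_mul_equiv, submatrix_mul_equiv]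

theorem hasLDU_of_isUnit_det_submatrix_castLE {n : ℕ} (A : Matrix (Fin n) (Fin n) R)
    (hA : ∀ k (hk : k < n), IsUnit (A.submatrix (Fin.castLE hk.le) (Fin.castLE hk.le)).det) :
    A.HasLDU := by
  induction n with
  | zero =>
    exact ⟨1, 1, 0, isLowerUnitriangular_one, isUpperUnitriangular_one, Subsingleton.elim _ _⟩
  | succ n ih =>
    obtain ⟨M, rfl⟩ := (reindex finSumFinEquiv finSumFinEquiv).surjective A
    have hM : ∀ k (hk : k ≤ n), M.toBlocks₁₁.submatrix (Fin.castLE hk) (Fin.castLE hk) =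
        (reindex finSumFinEquiv finSumFinEquiv M).submatrix (Fin.castLE (hk.trans n.le_succ))
          (Fin.castLE (hk.trans n.le_succ)) := by
      intro k hk
      have hcast (i : Fin k) : (finSumFinEquiv.symm (Fin.castLE (hk.trans n.le_succ) i) :
          Fin n ⊕ Fin 1) = Sum.inl (Fin.castLE hk i) :=
        finSumFinEquiv_symm_apply_castAdd (Fin.castLE hk i)
      ext i j
      simp [hcast, toBlocks₁₁]
    rw [← fromBlocks_toBlocks M]
    refine HasLDU.reindex_fromBlocks (ih _ fun k hk => ?_) ?_ (hasLDU_fin_one _)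
    · rw [hM k hk.le]; exact hA k (hk.trans n.lt_succ_self)
    · have := hA n n.lt_succ_self
      rwa [← hM n le_rfl, Fin.castLE_rfl, submatrix_id_id] at this

end LDU

end Matrix

open Matrix

section CounterDiagonal

variable {n : ℕ}

theorem isUnipotentUpperTriangular_iff {x : Matrix (Fin n) (Fin n) ℂ} :
    IsUnipotentUpperTriangular x ↔ x.IsUpperUnitriangular :=
  ⟨fun h => ⟨fun i j hij => h.2 i j hij, h.1⟩, fun h => ⟨h.2, fun _ _ hij => h.1 hij⟩⟩

theorem det_submatrix_rev_castLE_eq_sign_mul_det_flagPairMatrix {k : ℕ}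
    (g : Matrix (Fin n) (Fin n) ℂ) (hk : k ≤ n) :
    ((g.submatrix Fin.rev id).submatrix (Fin.castLE hk) (Fin.castLE hk)).det =
      Equiv.Perm.sign (Fin.revPerm : Equiv.Perm (Fin k)) * (flagPairMatrix g (n - k)).det := by
  let e : Fin (n - k) ⊕ Fin k ≃ Fin n := finSumFinEquiv.trans (finCongr (Nat.sub_add_cancel hk))
  let C : Matrix (Fin k) (Fin k) ℂ := of fun a b => g (e (.inr a)) (Fin.castLE hk b)
  have hblocks : (flagPairMatrix g (n - k)).submatrix e e =
      fromBlocks 1 (of fun a b => g (e (.inl a)) (Fin.castLE hk b)) 0 C := by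
    ext (a | a) (b | b) <;> simp [flagPairMatrix, e, C, one_apply, Fin.ext_iff] <;>
      first | rfl | omega
  have hminor : (g.submatrix Fin.rev id).submatrix (Fin.castLE hk) (Fin.castLE hk) =
      C.submatrix Fin.revPerm id := by
    ext a b
    simp only [submatrix_apply, id_eq, Fin.revPerm_apply, C, e, of_apply]
    congr 1
    ext
    simp
    omega
  rw [hminor, det_permute, ← det_submatrix_equiv_self e, hblocks, det_fromBlocks_zero₂₁,
    det_one, one_mul]

theorem isCounterDiagonal_iff {α : Matrix (Fin n) (Fin n) ℂ} :
    IsCounterDiagonal α ↔ ∀ i j, j ≠ i.rev → α i j = 0 := by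
  refine forall₂_congr fun i j => imp_congr_left (not_congr ?_)
  rw [Fin.ext_iff, Fin.val_rev]
  omega

theorem IsCounterDiagonal.apply_rev_ne_zero {α : Matrix (Fin n) (Fin n) ℂ}
    (hα : IsCounterDiagonal α) (hunit : IsUnit α) (i : Fin n) : α i i.rev ≠ 0 := by
  intro h
  refine (isUnit_iff_isUnit_det α).mp hunit |>.ne_zero (det_eq_zero_of_row_eq_zero i fun j => ?_)
  by_cases hj : j = i.rev
  · rwa [hj]
  · exact isCounterDiagonal_iff.mp hα i j hj

theorem IsCounterDiagonal.mul_apply_left {α : Matrix (Fin n) (Fin n) ℂ}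
    (hα : IsCounterDiagonal α) (u : Matrix (Fin n) (Fin n) ℂ) (i j : Fin n) :
    (u * α) i j = u i j.rev * α j.rev j := by
  refine (mul_apply ..).trans (Fintype.sum_eq_single j.rev fun k hk => ?_)
  rw [isCounterDiagonal_iff.mp hα k j fun h => hk (by rw [h, Fin.rev_rev]), mul_zero]

theorem IsCounterDiagonal.mul_apply_right {α : Matrix (Fin n) (Fin n) ℂ}
    (hα : IsCounterDiagonal α) (v : Matrix (Fin n) (Fin n) ℂ) (i j : Fin n) :
    (α * v) i j = α i i.rev * v i.rev j := by
  refine (mul_apply ..).trans (Fintype.sum_eq_single i.rev fun k hk => ?_)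
  rw [isCounterDiagonal_iff.mp hα i k hk, zero_mul]

theorem eq_one_of_mul_isCounterDiagonal_eq {u v α α' : Matrix (Fin n) (Fin n) ℂ}
    (hu : u.IsUpperUnitriangular) (hv : v.IsUpperUnitriangular)
    (hα : IsCounterDiagonal α) (hα' : IsCounterDiagonal α') (hαu : IsUnit α)
    (hαu' : IsUnit α') (h : u * α = α' * v) : u = 1 ∧ v = 1 := by
  have hentry (i j : Fin n) : u i j.rev * α j.rev j = α' i i.rev * v i.rev j := by
    rw [← hα.mul_apply_left, ← hα'.mul_apply_right, h]
  constructor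
  · ext i j
    rcases lt_trichotomy i j with hij | rfl | hji
    · have := hentry i j.rev
      rw [Fin.rev_rev, hv.apply_of_lt (Fin.rev_lt_rev.mpr hij), mul_zero] at this
      simpa [one_apply_ne hij.ne, hα.apply_rev_ne_zero hαu] using this
    · simp [hu.2]
    · simp [hu.apply_of_lt hji, one_apply_ne hji.ne']
  · ext i j
    rcases lt_trichotomy i j with hij | rfl | hji
    · have := hentry i.rev j
      have hα'i := hα'.apply_rev_ne_zero hαu' i.rev
      rw [Fin.rev_rev] at this hα'i
      rw [hu.apply_of_lt (Fin.rev_lt_rev.mpr hij), zero_mul] at this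
      simpa [one_apply_ne hij.ne, hα'i] using this.symm
    · simp [hv.2]
    · simp [hv.apply_of_lt hji, one_apply_ne hji.ne']

theorem eq_of_isCounterDiagonal_inv_mul_mul {g x y x' y' : Matrix (Fin n) (Fin n) ℂ}
    (hg : IsUnit g) (hx : x.IsUpperUnitriangular) (hy : y.IsUpperUnitriangular)
    (hx' : x'.IsUpperUnitriangular) (hy' : y'.IsUpperUnitriangular)
    (h : IsCounterDiagonal (x⁻¹ * g * y)) (h' : IsCounterDiagonal (x'⁻¹ * g * y')) :
    x = x' ∧ y = y' := by
  have hxdet := (isUnit_iff_isUnit_det x).mp hx.isUnit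
  have hy'det := (isUnit_iff_isUnit_det y').mp hy'.isUnit
  have hkey : (x'⁻¹ * x) * (x⁻¹ * g * y) = (x'⁻¹ * g * y') * (y'⁻¹ * y) := by
    simp only [Matrix.mul_assoc, mul_nonsing_inv_cancel_left _ _ hxdet,
      mul_nonsing_inv_cancel_left _ _ hy'det]
  obtain ⟨hu, hv⟩ := eq_one_of_mul_isCounterDiagonal_eq (hx'.inv.mul hx) (hy'.inv.mul hy) h h'
    ((hx.inv.isUnit.mul hg).mul hy.isUnit) ((hx'.inv.isUnit.mul hg).mul hy'.isUnit) hkey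
  have := x'.invertibleOfIsUnitDet ((isUnit_iff_isUnit_det x').mp hx'.isUnit)
  have := y'.invertibleOfIsUnitDet hy'det
  rw [inv_mul_eq_iff_eq_mul_of_invertible, Matrix.mul_one] at hu hv
  exact ⟨hu, hv⟩

theorem Matrix.HasLDU.exists_isCounterDiagonal_inv_mul_mul {g : Matrix (Fin n) (Fin n) ℂ}
    (h : (g.submatrix Fin.rev id).HasLDU) :
    ∃ x y : Matrix (Fin n) (Fin n) ℂ, x.IsUpperUnitriangular ∧ y.IsUpperUnitriangular ∧
      IsCounterDiagonal (x⁻¹ * g * y) := by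
  obtain ⟨L, U, d, hL, hU, hLDU⟩ := h
  have hg : g = L.submatrix Fin.rev Fin.rev * (diagonal d).submatrix Fin.rev id * U := by
    rw [← submatrix_mul _ _ _ _ _ Fin.rev_bijective, ← submatrix_id_id U,
      ← submatrix_mul _ _ _ _ _ Function.bijective_id, ← hLDU, submatrix_submatrix,
      Fin.rev_involutive.comp_self, Function.comp_id, submatrix_id_id]
  refine ⟨_, _, hL.submatrix_rev, hU.inv, ?_⟩
  have hxdet := (isUnit_iff_isUnit_det _).mp hL.submatrix_rev.isUnit
  have hUdet := (isUnit_iff_isUnit_det _).mp hU.isUnit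
  rw [hg, Matrix.mul_assoc _ _ U, nonsing_inv_mul_cancel_left _ _ hxdet,
    mul_nonsing_inv_cancel_right _ _ hUdet]
  exact isCounterDiagonal_iff.mpr fun i j hj => diagonal_apply_ne d (Ne.symm hj)

end CounterDiagonal

theorem exists_unique_counterDiagonal_normal_form_general (n : ℕ)
    (g : Matrix (Fin n) (Fin n) ℂ) (hg : IsUnit g)
    (hgen : ∀ k : ℕ, k ≤ n → IsUnit (flagPairMatrix g k)) :
    ∃! p : Matrix (Fin n) (Fin n) ℂ × Matrix (Fin n) (Fin n) ℂ,
      IsUnipotentUpperTriangular p.1 ∧ IsUnipotentUpperTriangular p.2 ∧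
        IsCounterDiagonal (p.1⁻¹ * g * p.2) := by
  simp only [isUnipotentUpperTriangular_iff]
  have hminors (k : ℕ) (hk : k < n) :
      IsUnit ((g.submatrix Fin.rev id).submatrix (Fin.castLE hk.le) (Fin.castLE hk.le)).det := by
    rw [det_submatrix_rev_castLE_eq_sign_mul_det_flagPairMatrix]
    exact ((Equiv.Perm.sign _).isUnit.map (Int.castRingHom ℂ)).mul
      ((isUnit_iff_isUnit_det _).mp (hgen _ (n.sub_le k)))
  obtain ⟨x, y, hx, hy, hxy⟩ :=
    (hasLDU_of_isUnit_det_submatrix_castLE _ hminors).exists_isCounterDiagonal_inv_mul_mul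
  refine ⟨(x, y), ⟨hx, hy, hxy⟩, fun p hp => ?_⟩
  obtain ⟨h₁, h₂⟩ := eq_of_isCounterDiagonal_inv_mul_mul hg hp.1 hp.2.1 hx hy hp.2.2 hxy
  exact Prod.ext h₁ h₂

/-- if `g` is invertible and the pair of affine flags `(N, gN)` is generic,
i.e. for every `k ∈ {0, …, n}` the matrix whose first `k` columns are `e₁, …, e_k` and
whose remaining columns are the first `n - k` columns of `g` is invertible, then there
exist unique unipotent upper-triangular matrices `x` and `y` such that `x⁻¹ * g * y` is
counter-diagonal. -/
theorem exists_unique_counterDiagonal_normal_form (n : ℕ) (hn : 1 ≤ n)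
    (g : Matrix (Fin n) (Fin n) ℂ) (hg : IsUnit g)
    (hgen : ∀ k : ℕ, k ≤ n → IsUnit (flagPairMatrix g k)) :
    ∃! p : Matrix (Fin n) (Fin n) ℂ × Matrix (Fin n) (Fin n) ℂ,
      IsUnipotentUpperTriangular p.1 ∧ IsUnipotentUpperTriangular p.2 ∧
        IsCounterDiagonal (p.1⁻¹ * g * p.2) :=
  exists_unique_counterDiagonal_normal_form_general n g hg hgen
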